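/- Consider the single-item all-pay auction with parameters (B_1, B_2, v_1, v_2), suppose B_1 = B_2 = (1/2)·min{v_1, v_2}, and let i be a player with v_i = min{v_1, v_2} (so L = min{B_1, B_2, v_1, v_2} = B_1). Then for every p ∈ [0, 1 − 2L/v_{3−i}], the strategy profile in which player i bids 0 with probability p and bids L with probability 1 − p, and player 3−i bids L with probability 1, is a Nash equilibrium. -/
import Mathlib


open MeasureTheory Set

noncomputable section

/-- `L = min {B₁, B₂, v₁, v₂}` for the single-item auction. -/
def Lval (B v : Fin 2 → ℝ) : ℝ := min (min (B 0) (B 1)) (min (v 0) (v 1))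

/-- Probability that player `i` wins the single item when bidding `xi` while the
opponent bids `xo`: the strictly higher bid wins; on a tie at
`min {B₁, B₂, v₁, v₂}` the player with the strictly larger `min {Bᵢ, vᵢ}` wins,
and all other ties are resolved by a fair coin. -/
def winProb (B v : Fin 2 → ℝ) (i : Fin 2) (xi xo : ℝ) : ℝ :=
  if xo < xi then 1
  else if xi < xo then 0
  else if xi = Lval B v ∧ min (B (1 - i)) (v (1 - i)) < min (B i) (v i) then 1
  else if xi = Lval B v ∧ min (B i) (v i) < min (B (1 - i)) (v (1 - i)) then 0
  else 1 / 2

/-- Expected utility of player `i` from the pure bids `xi` (own) and `xo` (opponent):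
he pays his bid in any case and receives `v i` with his winning probability. -/
def payoff (B v : Fin 2 → ℝ) (i : Fin 2) (xi xo : ℝ) : ℝ :=
  winProb B v i xi xo * v i - xi

/-- A mixed strategy of a player with budget `Bi`: a probability measure on `[0, Bi]`. -/
def IsStrategy (Bi : ℝ) (μ : Measure ℝ) : Prop :=
  IsProbabilityMeasure μ ∧ μ (Icc 0 Bi) = 1

/-- Expected utility of player `i` when he plays `μ` and the opponent plays `ν`. -/
def expUtil (B v : Fin 2 → ℝ) (i : Fin 2) (μ ν : Measure ℝ) : ℝ :=
  ∫ xi, (∫ xo, payoff B v i xi xo ∂ν) ∂μ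

/-- `(F 0, F 1)` is a (mixed) Nash equilibrium of the single-item all-pay auction. -/
def IsNash (B v : Fin 2 → ℝ) (F : Fin 2 → Measure ℝ) : Prop :=
  (∀ i, IsStrategy (B i) (F i)) ∧
  ∀ i, ∀ μ, IsStrategy (B i) μ →
    expUtil B v i μ (F (1 - i)) ≤ expUtil B v i (F i) (F (1 - i))

/-- The (topological) support of a mixed strategy. -/
def supp (μ : Measure ℝ) : Set ℝ := {x | ∀ U ∈ nhds x, μ U ≠ 0}

lemma my_integrable_dirac (f : ℝ → ℝ) (a : ℝ) : Integrable f (Measure.dirac a) := by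
  have hae : f =ᵐ[Measure.dirac a] fun _ => f a := by
    rw [Filter.EventuallyEq, ae_dirac_eq a]
    exact Filter.eventually_pure.2 rfl
  exact (integrable_const (f a)).congr hae.symm

lemma my_integral_combo (c d : ℝ) (hc : 0 ≤ c) (hd : 0 ≤ d) (a b : ℝ) (f : ℝ → ℝ) :
    ∫ x, f x ∂(ENNReal.ofReal c • Measure.dirac a + ENNReal.ofReal d • Measure.dirac b)
      = c * f a + d * f b := by
  rw [integral_add_measure ((my_integrable_dirac f a).smul_measure ENNReal.ofReal_ne_top)
      ((my_integrable_dirac f b).smul_measure ENNReal.ofReal_ne_top),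
    integral_smul_measure, integral_smul_measure, integral_dirac, integral_dirac,
    ENNReal.toReal_ofReal hc, ENNReal.toReal_ofReal hd]
  simp [smul_eq_mul]

lemma my_integral_le (μ : Measure ℝ) (hP : IsProbabilityMeasure μ) (s : Set ℝ)
    (hm : MeasurableSet s) (hs : μ s = 1) (g : ℝ → ℝ) (V : ℝ) (hV : 0 ≤ V)
    (hg : ∀ x ∈ s, g x ≤ V) : ∫ x, g x ∂μ ≤ V := by
  by_cases hi : Integrable g μ
  · have hcompl : μ sᶜ = 0 := by
      rw [measure_compl hm (measure_ne_top μ s), hs, measure_univ, tsub_self]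
    have hae : ∀ᵐ x ∂μ, g x ≤ V := by
      apply Filter.Eventually.mono (ae_iff.2 (measure_mono_null ?_ hcompl))
      · exact fun x h => h
      · intro x hx
        exact fun hxs => hx (hg x hxs)
    calc ∫ x, g x ∂μ ≤ ∫ _, V ∂μ := integral_mono_ae hi (integrable_const V) hae
      _ = V := by simp [integral_const]
  · rw [integral_undef hi]; exact hV

/-- If `B₁ = B₂ = (1/2)·min {v₁, v₂}` and `i` is a player with `vᵢ = min {v₁, v₂}`
(so `L = B₁`), then for every `p ∈ [0, 1 - 2L/v_{3-i}]` the profile in which player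
`i` bids `0` with probability `p` and `L` with probability `1 - p`, while player
`3 - i` bids `L` with probability `1`, is a Nash equilibrium. -/
theorem nash_border_case (B v : Fin 2 → ℝ) (hB : ∀ i, 0 ≤ B i) (hv : ∀ i, 0 < v i)
    (hBeq : B 0 = B 1) (hB2 : B 1 = 1 / 2 * min (v 0) (v 1))
    (i : Fin 2) (hvi : v i = min (v 0) (v 1))
    (p : ℝ) (hp : p ∈ Icc (0 : ℝ) (1 - 2 * Lval B v / v (1 - i))) :
    IsNash B v (fun k =>
      if k = i then
        ENNReal.ofReal p • Measure.dirac (0 : ℝ) +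
          ENNReal.ofReal (1 - p) • Measure.dirac (Lval B v)
      else Measure.dirac (Lval B v)) := by
  obtain ⟨hp0, hp2⟩ := hp
  set m := min (v 0) (v 1) with hm
  have hm0 : 0 < m := lt_min (hv 0) (hv 1)
  have hBk : ∀ k : Fin 2, B k = 1 / 2 * m := by
    have h1 : B 0 = 1 / 2 * m := hBeq.trans hB2
    intro k; fin_cases k
    · exact h1
    · exact hB2
  have hL : Lval B v = 1 / 2 * m := by
    rw [Lval, hBk 0, hBk 1, ← hm, min_self]
    exact min_eq_left (by linarith)
  set L := Lval B v with hLdef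
  have hL0 : 0 < L := by rw [hL]; linarith
  have hvk : ∀ k : Fin 2, m ≤ v k := by
    have h1 : m ≤ v 0 := min_le_left _ _
    have h2 : m ≤ v 1 := min_le_right _ _
    intro k; fin_cases k
    · exact h1
    · exact h2
  have hminall : ∀ k : Fin 2, min (B k) (v k) = L := by
    intro k; rw [hBk k, hL]
    exact min_eq_left (by linarith [hvk k])
  have hwin : ∀ (k : Fin 2) (xi xo : ℝ), winProb B v k xi xo
      = if xo < xi then 1 else if xi < xo then 0 else 1 / 2 := by
    intro k xi xo
    unfold winProb
    rw [hminall k, hminall (1 - k)]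
    simp [lt_irrefl]
  have hpaylt : ∀ (k : Fin 2) (x y : ℝ), x < y → payoff B v k x y = -x := by
    intro k x y h
    rw [payoff, hwin, if_neg (by linarith), if_pos h]; ring
  have hpaygt : ∀ (k : Fin 2) (x y : ℝ), y < x → payoff B v k x y = v k - x := by
    intro k x y h
    rw [payoff, hwin, if_pos h]; ring
  have hpayeq : ∀ (k : Fin 2) (x : ℝ), payoff B v k x x = v k / 2 - x := by
    intro k x
    rw [payoff, hwin, if_neg (lt_irrefl x), if_neg (lt_irrefl x)]; ring
  have hji : (1 : Fin 2) - i ≠ i := by fin_cases i <;> decide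
  have hjj : (1 : Fin 2) - (1 - i) = i := by fin_cases i <;> decide
  have hvj0 : 0 < v (1 - i) := hv _
  have hm2L : m = 2 * L := by rw [hL]; ring
  have hvj2L : 2 * L ≤ v (1 - i) := by rw [← hm2L]; exact hvk _
  have hp1 : p ≤ 1 := by
    have h0 : 0 ≤ 2 * L / v (1 - i) := by positivity
    linarith
  have h1p : 0 ≤ 1 - p := by linarith
  have hpv : p * v (1 - i) ≤ v (1 - i) - 2 * L := by
    have h2 : 2 * L / v (1 - i) ≤ 1 - p := by linarith
    have h3 := (div_le_iff₀ hvj0).mp h2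
    nlinarith
  have h0mem : Measure.dirac (0 : ℝ) (Icc 0 L) = 1 :=
    Measure.dirac_apply_of_mem (mem_Icc.2 ⟨le_refl 0, hL0.le⟩)
  have hLmem : Measure.dirac L (Icc 0 L) = 1 :=
    Measure.dirac_apply_of_mem (mem_Icc.2 ⟨hL0.le, le_refl L⟩)
  constructor
  · -- strategies
    intro k
    have hBkL : B k = L := by rw [hBk k, hL]
    by_cases hk : k = i
    · subst hk
      simp only [eq_self_iff_true, if_true]
      constructor
      · constructor
        rw [Measure.add_apply, Measure.smul_apply, Measure.smul_apply,
          measure_univ, measure_univ, smul_eq_mul, smul_eq_mul, mul_one, mul_one,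
          ← ENNReal.ofReal_add hp0 h1p]
        norm_num
      · rw [hBkL, Measure.add_apply, Measure.smul_apply, Measure.smul_apply,
          h0mem, hLmem, smul_eq_mul, smul_eq_mul, mul_one, mul_one,
          ← ENNReal.ofReal_add hp0 h1p]
        norm_num
    · simp only [if_neg hk]
      exact ⟨by infer_instance, by rw [hBkL]; exact hLmem⟩
  · -- best responses
    intro k μ hμ
    have hBkL : B k = L := by rw [hBk k, hL]
    by_cases hk : k = i
    · subst hk
      simp only [if_neg hji, eq_self_iff_true, if_true]
      rw [expUtil, expUtil]
      simp only [integral_dirac]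
      rw [my_integral_combo p (1 - p) hp0 h1p 0 L, hpaylt k 0 L hL0,
        hpayeq k L]
      have hRHS : p * -0 + (1 - p) * (v k / 2 - L) = 0 := by
        rw [hvi, hm2L]; ring
      rw [hRHS]
      apply my_integral_le μ hμ.1 (Icc 0 (B k)) measurableSet_Icc hμ.2 _ 0 le_rfl
      intro x hx
      rw [hBkL] at hx
      rcases eq_or_lt_of_le hx.2 with hxL | hxL
      · rw [hxL, hpayeq, hvi, hm2L]; linarith
      · rw [hpaylt k x L hxL]; linarith [hx.1]
    · have hk2 : k = 1 - i := by
        fin_cases i <;> fin_cases k <;>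
          first
            | rfl
            | (exact absurd rfl hk)
            | decide
      subst hk2
      simp only [hjj, if_neg hji, eq_self_iff_true, if_true]
      rw [expUtil, expUtil]
      have hinner : ∀ x : ℝ, (∫ xo, payoff B v (1 - i) x xo
            ∂(ENNReal.ofReal p • Measure.dirac 0 + ENNReal.ofReal (1 - p) • Measure.dirac L))
          = p * payoff B v (1 - i) x 0 + (1 - p) * payoff B v (1 - i) x L :=
        fun x => my_integral_combo p (1 - p) hp0 h1p 0 L _
      simp only [hinner]
      rw [integral_dirac]
      set V := p * payoff B v (1 - i) L 0 + (1 - p) * payoff B v (1 - i) L L with hV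
      have hVval : V = p * (v (1 - i) - L) + (1 - p) * (v (1 - i) / 2 - L) := by
        rw [hV, hpaygt _ _ _ hL0, hpayeq]
      have hV0 : 0 ≤ V := by
        rw [hVval]
        nlinarith [mul_nonneg hp0 (by linarith : (0:ℝ) ≤ v (1 - i) - L),
          mul_nonneg h1p (by linarith : (0:ℝ) ≤ v (1 - i) / 2 - L)]
      apply my_integral_le μ hμ.1 (Icc 0 (B (1 - i))) measurableSet_Icc hμ.2 _ V hV0
      intro x hx
      rw [hBkL] at hx
      rcases eq_or_lt_of_le hx.1 with h0x | h0x
      · rw [← h0x, hpayeq, hpaylt _ _ _ hL0, hVval]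
        nlinarith
      · rcases eq_or_lt_of_le hx.2 with hxL | hxL
        · rw [hxL]
        · rw [hpaygt _ _ _ h0x, hpaylt _ _ _ hxL, hVval]
          nlinarith
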